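/- arXiv:2310.03445 — 12 statements merged into one kernel-verified Lean document; each statement's English description precedes it below -/
import Mathlib

section
/- Let L be a complete lattice and f : L → L a monotone function. Then the map μ sending each post-fixed point x (i.e. x ≤ f(x)) to the least fixed point of f above x, and the map ν sending each pre-fixed point y (i.e. f(y) ≤ y) to the greatest fixed point of f below y, form a Galois connection: for all post-fixed points x and pre-fixed points y, μ(x) ≤ y if and only if x ≤ ν(y). -/
/-! Every post-fixed point lies below the least pre-fixed point above it, and the greatest
post-fixed point below a pre-fixed point `y` is itself a pre-fixed point (indeed a fixed
point, by the Knaster–Tarski argument). So if `μ x ≤ y` then `x` is a post-fixed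
point below `y`, hence `x ≤ ν y`; and if `x ≤ ν y` then `ν y` is a pre-fixed point above `x`,
hence `μ x ≤ ν y ≤ y`. -/

section

variable {L : Type*} [CompleteLattice L] {f : L → L}

theorem le_sInf_preFixed_above (x : L) : x ≤ sInf {z | x ≤ z ∧ f z ≤ z} :=
  le_sInf fun _ hz => hz.1

theorem sSup_postFixed_below_le (y : L) : sSup {z | z ≤ y ∧ z ≤ f z} ≤ y :=
  sSup_le fun _ hz => hz.1

theorem sSup_postFixed_below_le_map (hf : Monotone f) (y : L) :
    sSup {z | z ≤ y ∧ z ≤ f z} ≤ f (sSup {z | z ≤ y ∧ z ≤ f z}) :=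
  sSup_le fun _ hz => hz.2.trans (hf (le_sSup hz))

theorem map_sSup_postFixed_below_le (hf : Monotone f) {y : L} (hy : f y ≤ y) :
    f (sSup {z | z ≤ y ∧ z ≤ f z}) ≤ sSup {z | z ≤ y ∧ z ≤ f z} :=
  le_sSup ⟨(hf (sSup_postFixed_below_le y)).trans hy, hf (sSup_postFixed_below_le_map hf y)⟩

theorem sInf_preFixed_above_le_iff_le_sSup_postFixed_below (hf : Monotone f) {x y : L}
    (hx : x ≤ f x) (hy : f y ≤ y) :
    sInf {z | x ≤ z ∧ f z ≤ z} ≤ y ↔ x ≤ sSup {z | z ≤ y ∧ z ≤ f z} :=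
  ⟨fun h => le_sSup ⟨(le_sInf_preFixed_above x).trans h, hx⟩,
    fun h => (sInf_le (s := {z | x ≤ z ∧ f z ≤ z}) ⟨h, map_sSup_postFixed_below_le hf hy⟩).trans
      (sSup_postFixed_below_le y)⟩

end

/-- The Galois connection between post-fixed points and pre-fixed points of a
monotone function on a complete lattice: `μ x ≤ y ↔ x ≤ ν y`. -/
theorem relative_fixed_points_galois_connection
    {L : Type*} [CompleteLattice L] (f : L → L) (hf : Monotone f)
    (μ : ∀ x : L, x ≤ f x → L) (ν : ∀ y : L, f y ≤ y → L)
    (hμ : ∀ (x : L) (hx : x ≤ f x), μ x hx = sInf {z | x ≤ z ∧ f z ≤ z})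
    (hν : ∀ (y : L) (hy : f y ≤ y), ν y hy = sSup {z | z ≤ y ∧ z ≤ f z}) :
    ∀ (x y : L) (hx : x ≤ f x) (hy : f y ≤ y),
      μ x hx ≤ y ↔ x ≤ ν y hy := by
  intro x y hx hy
  rw [hμ, hν]
  exact sInf_preFixed_above_le_iff_le_sSup_postFixed_below hf hx hy
end

section
/- Let C be a category and F : C → C an endofunctor. Let a : F A → A be an F-algebra and suppose b : B → F B is a coalgebra terminal relative to a, i.e. there is an isomorphism, natural in coalgebras c, between coalgebra morphisms c → b and coalgebra-to-algebra morphisms from c to a. Then b : B → F B is an isomorphism; in particular B is a fixed point of F. -/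
/-!
Let `h : B ⟶ A` be the ca-morphism corresponding to `𝟙 B`. Then `F h ≫ a` is a ca-morphism
out of the coalgebra `F b`, so it corresponds to a coalgebra morphism `g : F B ⟶ B`. By
naturality along the coalgebra morphism `b : (B, b) ⟶ (F B, F b)`, the endomorphism `b ≫ g`
corresponds to `b ≫ F h ≫ a = h`, hence `b ≫ g = 𝟙 B`; and then
`g ≫ b = F b ≫ F g = F (b ≫ g) = 𝟙`, as in Lambek's lemma.
-/

open CategoryTheory

namespace CategoryTheory.Functor

variable {C : Type*} [Category C] (F : C ⥤ C)

lemma coalgebra_hom_comp {X Y Z : C} {x : X ⟶ F.obj X} {y : Y ⟶ F.obj Y} {z : Z ⟶ F.obj Z}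
    {g : X ⟶ Y} {f : Y ⟶ Z} (hg : x ≫ F.map g = g ≫ y) (hf : y ≫ F.map f = f ≫ z) :
    x ≫ F.map (g ≫ f) = (g ≫ f) ≫ z := by
  rw [F.map_comp, reassoc_of% hg, hf, Category.assoc]

lemma hylo_map_comp {A X : C} {a : F.obj A ⟶ A} {x : X ⟶ F.obj X} {f : X ⟶ A}
    (hf : f = x ≫ F.map f ≫ a) : F.map f ≫ a = F.map x ≫ F.map (F.map f ≫ a) ≫ a := by
  conv_lhs => rw [hf]
  simp only [F.map_comp, Category.assoc]

lemma isIso_of_coalgebra_hom_retraction {B : C} {b : B ⟶ F.obj B} {g : F.obj B ⟶ B}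
    (hg : F.map b ≫ F.map g = g ≫ b) (hbg : b ≫ g = 𝟙 B) : IsIso b :=
  ⟨g, hbg, by rw [← hg, ← F.map_comp, hbg, F.map_id]⟩

end CategoryTheory.Functor

/-- If `b : B ⟶ F B` is terminal relative to the algebra `a : F A ⟶ A`
(there is a bijection, natural in the coalgebra `(X, x)`, between coalgebra
morphisms into `b` and coalgebra-to-algebra morphisms into `a`), then `b`
is an isomorphism. -/
theorem relatively_terminal_coalgebra_is_fixed_point
    {C : Type*} [Category C] (F : C ⥤ C)
    {A B : C} (a : F.obj A ⟶ A) (b : B ⟶ F.obj B)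
    (φ : ∀ (X : C) (x : X ⟶ F.obj X),
      {f : X ⟶ B // x ≫ F.map f = f ≫ b} ≃ {f : X ⟶ A // f = x ≫ F.map f ≫ a})
    (nat : ∀ (X Y : C) (x : X ⟶ F.obj X) (y : Y ⟶ F.obj Y) (g : X ⟶ Y)
      (hg : x ≫ F.map g = g ≫ y)
      (f : Y ⟶ B) (hf : y ≫ F.map f = f ≫ b)
      (hgf : x ≫ F.map (g ≫ f) = (g ≫ f) ≫ b),
      ((φ X x) ⟨g ≫ f, hgf⟩ : X ⟶ A) = g ≫ ((φ Y y) ⟨f, hf⟩ : Y ⟶ A)) :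
    IsIso b := by
  have hid : b ≫ F.map (𝟙 B) = 𝟙 B ≫ b := by simp
  set h := φ B b ⟨𝟙 B, hid⟩
  set g := (φ (F.obj B) (F.map b)).symm ⟨F.map h.1 ≫ a, F.hylo_map_comp h.2⟩
  have hbg : b ≫ F.map (b ≫ g.1) = (b ≫ g.1) ≫ b := F.coalgebra_hom_comp rfl g.2
  have hφg : φ (F.obj B) (F.map b) g = ⟨F.map h.1 ≫ a, F.hylo_map_comp h.2⟩ :=
    Equiv.apply_symm_apply _ _
  have hφbg : φ B b ⟨b ≫ g.1, hbg⟩ = h := by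
    apply Subtype.ext
    rw [nat B _ b _ b rfl g.1 g.2 hbg, hφg]
    exact h.2.symm
  have hret : b ≫ g.1 = 𝟙 B := congrArg Subtype.val ((φ B b).injective hφbg)
  exact F.isIso_of_coalgebra_hom_retraction g.2 hret
end

section
/- Let C be a category and F : C → C an endofunctor. Let b : B → F B be a coalgebra and suppose a : F A → A is an algebra initial relative to b. Then a : F A → A is an isomorphism; in particular A is a fixed point of F. -/
/-!
Lambek's argument, with the hylomorphisms of `b` standing in for the algebra morphisms out of
an initial algebra. Let `h : B ⟶ A` correspond to `𝟙 A`. Then `b ≫ F h` is a hylomorphism into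
the algebra `F a`, so it corresponds to an algebra morphism `k : a ⟶ F a`. By naturality
`k ≫ a` corresponds to `b ≫ F h ≫ a = h`, hence `k ≫ a = 𝟙 A`, and then
`a ≫ k = F k ≫ F a = F (k ≫ a) = 𝟙`.
-/

open CategoryTheory

namespace CategoryTheory.Functor

variable {C : Type*} [Category C] (F : C ⥤ C)

theorem hylo_comp_map_of_hylo {A B : C} {a : F.obj A ⟶ A} {b : B ⟶ F.obj B} {h : B ⟶ A}
    (hh : h = b ≫ F.map h ≫ a) :
    b ≫ F.map h = b ≫ F.map (b ≫ F.map h) ≫ F.map a := by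
  conv_lhs => rw [hh]
  simp only [Functor.map_comp, Category.assoc]

theorem algHom_comp_str {A : C} {a : F.obj A ⟶ A} {k : A ⟶ F.obj A}
    (hk : F.map k ≫ F.map a = a ≫ k) :
    F.map (k ≫ a) ≫ a = a ≫ k ≫ a := by
  rw [F.map_comp, Category.assoc, reassoc_of% hk]

theorem isIso_str_of_algHom_comp_str_eq_id {A : C} {a : F.obj A ⟶ A} {k : A ⟶ F.obj A}
    (hk : F.map k ≫ F.map a = a ≫ k) (hka : k ≫ a = 𝟙 A) : IsIso a :=
  ⟨k, by rw [← hk, ← F.map_comp, hka, F.map_id], hka⟩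

end CategoryTheory.Functor

/-- If `a : F A ⟶ A` is initial relative to the coalgebra `b : B ⟶ F B`
(there is a bijection, natural in the algebra `(X, x)`, between algebra
morphisms out of `a` and coalgebra-to-algebra morphisms from `b`), then `a`
is an isomorphism. -/
theorem relatively_initial_algebra_is_fixed_point
    {C : Type*} [Category C] (F : C ⥤ C)
    {A B : C} (a : F.obj A ⟶ A) (b : B ⟶ F.obj B)
    (ψ : ∀ (X : C) (x : F.obj X ⟶ X),
      {f : A ⟶ X // F.map f ≫ x = a ≫ f} ≃ {f : B ⟶ X // f = b ≫ F.map f ≫ x})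
    (nat : ∀ (X Y : C) (x : F.obj X ⟶ X) (y : F.obj Y ⟶ Y) (g : X ⟶ Y)
      (hg : F.map g ≫ y = x ≫ g)
      (f : A ⟶ X) (hf : F.map f ≫ x = a ≫ f)
      (hfg : F.map (f ≫ g) ≫ y = a ≫ (f ≫ g)),
      ((ψ Y y) ⟨f ≫ g, hfg⟩ : B ⟶ Y) = ((ψ X x) ⟨f, hf⟩ : B ⟶ X) ≫ g) :
    IsIso a := by
  let h := ψ A a ⟨𝟙 A, by simp⟩
  let k := (ψ (F.obj A) (F.map a)).symm ⟨b ≫ F.map h.1, F.hylo_comp_map_of_hylo h.2⟩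
  have hψk : (ψ (F.obj A) (F.map a) k).1 = b ≫ F.map h.1 :=
    congrArg Subtype.val ((ψ (F.obj A) (F.map a)).apply_symm_apply _)
  have hka : k.1 ≫ a = 𝟙 A := by
    have hψka : ψ A a ⟨k.1 ≫ a, F.algHom_comp_str k.2⟩ = h := Subtype.ext <| by
      rw [nat _ _ _ _ a rfl k.1 k.2, hψk, Category.assoc, ← h.2]
    exact congrArg Subtype.val ((ψ A a).injective hψka)
  exact F.isIso_str_of_algHom_comp_str_eq_id k.2 hka
end

section
/- Let C be a category, F : C → C an endofunctor, and suppose every F-coalgebra b admits a relatively initial algebra μ(b) and every F-algebra a admits a relatively terminal coalgebra ν(a). Then μ extends to a functor Coalg(F) → Alg(F), ν extends to a functor Alg(F) → Coalg(F), and μ is left adjoint to ν: there is an isomorphism Alg(F)(μ(b), a) ≅ Coalg(F)(b, ν(a)), natural in b and a. -/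
open CategoryTheory

namespace RelFixAux

open Endofunctor

variable {C : Type*} [Category C] {F : C ⥤ C}

/-- coalgebra-to-algebra morphism predicate -/
def IsCA (b : Coalgebra F) (a : Algebra F) (j : b.V ⟶ a.a) : Prop :=
  j = b.str ≫ F.map j ≫ a.str

lemma IsCA.comp_alg {b : Coalgebra F} {a a' : Algebra F} {j : b.V ⟶ a.a}
    (hj : IsCA b a j) (g : a ⟶ a') : IsCA b a' (j ≫ g.f) := by
  unfold IsCA at *
  conv_lhs => rw [hj]
  rw [F.map_comp]
  simp [Category.assoc, g.h]

lemma IsCA.coalg_comp {b' b : Coalgebra F} {a : Algebra F} {j : b.V ⟶ a.a}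
    (hj : IsCA b a j) (g : b' ⟶ b) : IsCA b' a (g.f ≫ j) := by
  unfold IsCA at *
  conv_lhs => rw [hj]
  rw [F.map_comp]
  simp [← Category.assoc, g.h]

end RelFixAux

/-- If every `F`-coalgebra `b` has a relatively initial algebra `μ b` (with
universal ca-morphism `η b`) and every `F`-algebra `a` has a relatively
terminal coalgebra `ν a` (with universal ca-morphism `ε a`), then `μ` and `ν`
extend to functors between the categories of coalgebras and algebras, and
`μ` is left adjoint to `ν`. -/
theorem relative_fixed_points_adjunction
    {C : Type*} [Category C] (F : C ⥤ C)
    (μ : Endofunctor.Coalgebra F → Endofunctor.Algebra F)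
    (ν : Endofunctor.Algebra F → Endofunctor.Coalgebra F)
    (η : ∀ b : Endofunctor.Coalgebra F, b.V ⟶ (μ b).a)
    (hη : ∀ b, η b = b.str ≫ F.map (η b) ≫ (μ b).str)
    (hμ : ∀ (b : Endofunctor.Coalgebra F) (a : Endofunctor.Algebra F)
      (j : b.V ⟶ a.a), j = b.str ≫ F.map j ≫ a.str →
        ∃! g : μ b ⟶ a, η b ≫ g.f = j)
    (ε : ∀ a : Endofunctor.Algebra F, (ν a).V ⟶ a.a)
    (hε : ∀ a, ε a = (ν a).str ≫ F.map (ε a) ≫ a.str)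
    (hν : ∀ (a : Endofunctor.Algebra F) (b : Endofunctor.Coalgebra F)
      (j : b.V ⟶ a.a), j = b.str ≫ F.map j ≫ a.str →
        ∃! g : b ⟶ ν a, g.f ≫ ε a = j) :
    ∃ (M : Endofunctor.Coalgebra F ⥤ Endofunctor.Algebra F)
      (N : Endofunctor.Algebra F ⥤ Endofunctor.Coalgebra F),
      (∀ b, M.obj b = μ b) ∧ (∀ a, N.obj a = ν a) ∧ Nonempty (M ⊣ N) := by
  classical
  open RelFixAux in
  have hηCA : ∀ b, IsCA b (μ b) (η b) := hη
  have hεCA : ∀ a, IsCA (ν a) a (ε a) := hε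
  choose toAlg0 toAlg_spec0 toAlg_uniq0 using hμ
  choose toCoalg0 toCoalg_spec0 toCoalg_uniq0 using hν
  let toAlg : ∀ {b a} (j : b.V ⟶ a.a), IsCA b a j → (μ b ⟶ a) :=
    fun {b a} j hj => toAlg0 b a j hj
  have toAlg_spec : ∀ {b a} (j : b.V ⟶ a.a) (hj : IsCA b a j),
      η b ≫ (toAlg j hj).f = j := fun j hj => toAlg_spec0 _ _ j hj
  have toAlg_spec' : ∀ {b a} (j : b.V ⟶ a.a) (hj : IsCA b a j) {Z : C}
      (k : a.a ⟶ Z), η b ≫ (toAlg j hj).f ≫ k = j ≫ k := fun {b a} j hj {Z} k => by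
    rw [← Category.assoc, toAlg_spec j hj]
  have toAlg_uniq : ∀ {b a} (j : b.V ⟶ a.a) (hj : IsCA b a j) (g : μ b ⟶ a),
      η b ≫ g.f = j → g = toAlg j hj :=
    fun j hj g hg => toAlg_uniq0 _ _ j hj g hg
  let toCoalg : ∀ {b a} (j : b.V ⟶ a.a), IsCA b a j → (b ⟶ ν a) :=
    fun {b a} j hj => toCoalg0 a b j hj
  have toCoalg_spec : ∀ {b a} (j : b.V ⟶ a.a) (hj : IsCA b a j),
      (toCoalg j hj).f ≫ ε a = j := fun j hj => toCoalg_spec0 _ _ j hj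
  have toCoalg_spec' : ∀ {b a} (j : b.V ⟶ a.a) (hj : IsCA b a j) {Z : C}
      (k : a.a ⟶ Z), (toCoalg j hj).f ≫ ε a ≫ k = j ≫ k := fun {b a} j hj {Z} k => by
    rw [← Category.assoc, toCoalg_spec j hj]
  have toCoalg_uniq : ∀ {b a} (j : b.V ⟶ a.a) (hj : IsCA b a j) (g : b ⟶ ν a),
      g.f ≫ ε a = j → g = toCoalg j hj :=
    fun j hj g hg => toCoalg_uniq0 _ _ j hj g hg
  have alg_ext : ∀ {b a} (g g' : μ b ⟶ a), η b ≫ g.f = η b ≫ g'.f → g = g' :=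
    fun {b a} g g' h =>
      (toAlg_uniq (η b ≫ g.f) ((hηCA b).comp_alg g) g rfl).trans
        (toAlg_uniq (η b ≫ g.f) ((hηCA b).comp_alg g) g' h.symm).symm
  have coalg_ext : ∀ {b a} (g g' : b ⟶ ν a), g.f ≫ ε a = g'.f ≫ ε a → g = g' :=
    fun {b a} g g' h =>
      (toCoalg_uniq (g.f ≫ ε a) ((hεCA a).coalg_comp g) g rfl).trans
        (toCoalg_uniq (g.f ≫ ε a) ((hεCA a).coalg_comp g) g' h.symm).symm
  let M : Endofunctor.Coalgebra F ⥤ Endofunctor.Algebra F :=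
    { obj := μ
      map := fun {b b'} f => toAlg (f.f ≫ η b') ((hηCA b').coalg_comp f)
      map_id := fun b => by
        apply alg_ext
        simp [toAlg_spec0, toAlg_spec]
      map_comp := fun {b b' b''} f g => by
        apply alg_ext
        simp [toAlg_spec0, toAlg_spec', toAlg_spec] }
  let N : Endofunctor.Algebra F ⥤ Endofunctor.Coalgebra F :=
    { obj := ν
      map := fun {a a'} g => toCoalg (ε a ≫ g.f) ((hεCA a).comp_alg g)
      map_id := fun a => by
        apply coalg_ext
        simp [toCoalg_spec0, toCoalg_spec]
      map_comp := fun {a a' a''} f g => by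
        apply coalg_ext
        simp [toCoalg_spec0, toCoalg_spec', toCoalg_spec] }
  refine ⟨M, N, fun _ => rfl, fun _ => rfl, ⟨Adjunction.mkOfHomEquiv
    { homEquiv := fun b a =>
        { toFun := fun g => toCoalg (η b ≫ g.f) ((hηCA b).comp_alg g)
          invFun := fun h => toAlg (h.f ≫ ε a) ((hεCA a).coalg_comp h)
          left_inv := fun g => by
            apply alg_ext
            simp [toAlg_spec0, toCoalg_spec0, toAlg_spec, toCoalg_spec]
          right_inv := fun h => by
            apply coalg_ext
            simp [toCoalg_spec0, toAlg_spec0, toCoalg_spec, toAlg_spec] }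
      homEquiv_naturality_left_symm := fun {b' b a} f h => by
        dsimp only [Equiv.coe_fn_symm_mk]
        apply alg_ext
        simp [toAlg_spec0, toAlg_spec', toCoalg_spec0, M, toAlg_spec, toCoalg_spec]
      homEquiv_naturality_right := fun {b a a'} g k => by
        dsimp only [Equiv.coe_fn_mk]
        apply coalg_ext
        simp [toCoalg_spec0, toCoalg_spec', toAlg_spec0, N, toCoalg_spec, toAlg_spec] }⟩⟩
end

section
/- Let F : C → C be an endofunctor, a : F A → A an algebra admitting a relatively terminal coalgebra ν(a). Then a is corecursive (for every F-coalgebra b there is a unique coalgebra-to-algebra morphism from b to a) if and only if ν(a) is a terminal F-coalgebra. -/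
/-!
Precomposition with the universal ca-morphism `ε : ν(a) → a` is a bijection from coalgebra
morphisms `b ⟶ ν(a)` to ca-morphisms `b → a`, so for each `b` one of these sets is a singleton
iff the other is.
-/

open CategoryTheory Limits

namespace CategoryTheory

lemma Limits.nonempty_isTerminal_iff_forall_nonempty_unique {C : Type*} [Category C] (X : C) :
    Nonempty (IsTerminal X) ↔ ∀ Y : C, Nonempty (Unique (Y ⟶ X)) :=
  ((isTerminalEquivUnique (Functor.empty C) X).nonempty_congr).trans Classical.nonempty_pi

namespace Endofunctor

variable {C : Type*} [Category C] {F : C ⥤ C}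

/-- The ca-morphisms (coalgebra-to-algebra morphisms) from `b` to `a`; the paper's `Hylo(b, a)`. -/
abbrev Hylo (b : Coalgebra F) (a : Algebra F) : Type _ :=
  {f : b.V ⟶ a.a // f = b.str ≫ F.map f ≫ a.str}

def Hylo.precomp {a : Algebra F} {b N : Coalgebra F} (g : b ⟶ N) (ε : Hylo N a) : Hylo b a :=
  ⟨g.f ≫ ε.1, by
    conv_lhs => rw [ε.2]
    simp only [F.map_comp, Category.assoc, Coalgebra.Hom.h_assoc]⟩

noncomputable def homEquivHyloOfRelativelyTerminal {a : Algebra F} {N : Coalgebra F}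
    (ε : Hylo N a) (hN : ∀ (b : Coalgebra F) (j : Hylo b a), ∃! g : b ⟶ N, g.f ≫ ε.1 = j.1)
    (b : Coalgebra F) : (b ⟶ N) ≃ Hylo b a :=
  Equiv.ofBijective (Hylo.precomp · ε) <|
    (Function.bijective_iff_existsUnique _).2 fun j => by
      simpa only [Hylo.precomp, Subtype.ext_iff] using hN b j

end Endofunctor

end CategoryTheory

/-- If the algebra `a` has a relatively terminal coalgebra `N = ν(a)` (with
universal ca-morphism `ε`), then `a` is corecursive (for every coalgebra `b`
there is a unique ca-morphism from `b` to `a`) iff `N` is a terminal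
`F`-coalgebra. -/
theorem corecursive_iff_relatively_terminal_is_terminal
    {C : Type*} [Category C] (F : C ⥤ C)
    (a : Endofunctor.Algebra F) (N : Endofunctor.Coalgebra F)
    (ε : N.V ⟶ a.a) (hε : ε = N.str ≫ F.map ε ≫ a.str)
    (hN : ∀ (b : Endofunctor.Coalgebra F) (j : b.V ⟶ a.a),
      j = b.str ≫ F.map j ≫ a.str → ∃! g : b ⟶ N, g.f ≫ ε = j) :
    (∀ (b : Endofunctor.Coalgebra F),
        ∃! f : b.V ⟶ a.a, f = b.str ≫ F.map f ≫ a.str) ↔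
      Nonempty (Limits.IsTerminal N) := by
  have e := Endofunctor.homEquivHyloOfRelativelyTerminal ⟨ε, hε⟩ fun b j => hN b j.1 j.2
  simp only [← unique_subtype_iff_existsUnique, nonempty_isTerminal_iff_forall_nonempty_unique,
    unique_iff_subsingleton_and_nonempty]
  exact forall_congr' fun b => by rw [(e b).subsingleton_congr, (e b).nonempty_congr]
end

section
/- Let F : C → C be an endofunctor, b : B → F B a coalgebra, and suppose B admits a free F-algebra (T, α : F T → T, in : B → T). Define unfold : T → T as the unique algebra endomorphism of (T, α) extending the map α ∘ F(in) ∘ b : B → T. Then: an algebra morphism f : (T, α) → (A, a) satisfies f ∘ unfold = f if and only if the composite f ∘ in : B → A is a coalgebra-to-algebra morphism from b to a. -/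
/-!
For an algebra morphism `f`, both `f` and `unfold ≫ f` are algebra morphisms out of the free
algebra, so they are equal iff they agree after `in'`; and `in' ≫ unfold ≫ f` is always
`b ≫ F(in' ≫ f) ≫ a`, so agreement after `in'` is exactly the ca-morphism equation.
-/

open CategoryTheory

namespace CategoryTheory.Functor

variable {C : Type*} [Category C] (F : C ⥤ C)

theorem alg_hom_comp {X Y Z : C} {x : F.obj X ⟶ X} {y : F.obj Y ⟶ Y} {z : F.obj Z ⟶ Z}
    {g : X ⟶ Y} {h : Y ⟶ Z} (hg : F.map g ≫ y = x ≫ g) (hh : F.map h ≫ z = y ≫ h) :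
    F.map (g ≫ h) ≫ z = x ≫ g ≫ h := by
  rw [F.map_comp, Category.assoc, hh, ← Category.assoc, hg, Category.assoc]

theorem free_alg_hom_ext {B T A : C} {α : F.obj T ⟶ T} {in' : B ⟶ T}
    (free : ∀ (A : C) (a : F.obj A ⟶ A) (j : B ⟶ A),
      ∃! g : T ⟶ A, (F.map g ≫ a = α ≫ g) ∧ in' ≫ g = j)
    {a : F.obj A ⟶ A} {g h : T ⟶ A} (hg : F.map g ≫ a = α ≫ g) (hh : F.map h ≫ a = α ≫ h)
    (hgh : in' ≫ g = in' ≫ h) : g = h :=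
  (free A a (in' ≫ h)).unique ⟨hg, hgh⟩ ⟨hh, rfl⟩

theorem in_comp_unfold_comp {B T A : C} {b : B ⟶ F.obj B} {α : F.obj T ⟶ T} {in' : B ⟶ T}
    {unfold : T ⟶ T} (hunfold : in' ≫ unfold = b ≫ F.map in' ≫ α)
    {a : F.obj A ⟶ A} {f : T ⟶ A} (hf : F.map f ≫ a = α ≫ f) :
    in' ≫ unfold ≫ f = b ≫ F.map (in' ≫ f) ≫ a := by
  rw [← Category.assoc, hunfold, F.map_comp, Category.assoc, Category.assoc, Category.assoc, hf]

end CategoryTheory.Functor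

/-- Let `(T, α, in')` be the free `F`-algebra on `B`, `b : B ⟶ F B` a
coalgebra, and `unfold : T ⟶ T` the unique algebra endomorphism extending
`α ∘ F(in') ∘ b`. Then an algebra morphism `f : (T, α) ⟶ (A, a)` coequalizes
`id` and `unfold` iff `f ∘ in'` is a coalgebra-to-algebra morphism from `b`
to `a`. -/
theorem coequalizes_unfold_iff_ca_morphism
    {C : Type*} [Category C] (F : C ⥤ C)
    {B T : C} (b : B ⟶ F.obj B) (α : F.obj T ⟶ T) (in' : B ⟶ T)
    (free : ∀ (A : C) (a : F.obj A ⟶ A) (j : B ⟶ A),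
      ∃! g : T ⟶ A, (F.map g ≫ a = α ≫ g) ∧ in' ≫ g = j)
    (unfold : T ⟶ T)
    (hunfold₁ : F.map unfold ≫ α = α ≫ unfold)
    (hunfold₂ : in' ≫ unfold = b ≫ F.map in' ≫ α) :
    ∀ (A : C) (a : F.obj A ⟶ A) (f : T ⟶ A), F.map f ≫ a = α ≫ f →
      ((unfold ≫ f = f) ↔ (in' ≫ f = b ≫ F.map (in' ≫ f) ≫ a)) := by
  intro A a f hf
  have hunfold_f : in' ≫ unfold ≫ f = b ≫ F.map (in' ≫ f) ≫ a :=
    F.in_comp_unfold_comp hunfold₂ hf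
  constructor
  · intro h
    rwa [h] at hunfold_f
  · intro h
    exact F.free_alg_hom_ext free (F.alg_hom_comp hunfold₁ hf) hf (hunfold_f.trans h.symm)
end

section
/- In the setting of the previous statement, a coequalizer of the parallel pair (id, unfold) : (T, α) ⇉ (T, α) in the category of F-algebras exists if and only if b admits a relatively initial algebra; moreover, if q : T → μ(B) is such a coequalizer then μ(B) together with the ca-morphism q ∘ in is an algebra initial relative to b, and conversely. -/
/-!
Since `T` is free on `B`, algebra morphisms `g : T ⟶ a` correspond to morphisms `in' ≫ g.f`
out of `B`, and `unfold ≫ g` corresponds to `b.str ≫ F.map (in' ≫ g.f) ≫ a.str`. Hence `g`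
coequalizes `(𝟙 T, unfold)` exactly when `in' ≫ g.f` is a coalgebra-to-algebra morphism, and
under this correspondence the universal property of a coequalizer `q` becomes relative
initiality of `in' ≫ q.f`.
-/

open CategoryTheory CategoryTheory.Limits

/-- `M` together with a ca-morphism `η : b.V ⟶ M.a` is an algebra initial
relative to the coalgebra `b`. -/
def RelativelyInitial {C : Type*} [Category C] {F : C ⥤ C}
    (b : Endofunctor.Coalgebra F) (M : Endofunctor.Algebra F)
    (η : b.V ⟶ M.a) : Prop :=
  η = b.str ≫ F.map η ≫ M.str ∧
    ∀ (a : Endofunctor.Algebra F) (j : b.V ⟶ a.a),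
      j = b.str ≫ F.map j ≫ a.str → ∃! g : M ⟶ a, η ≫ g.f = j

section FreeAlgebra

variable {C : Type*} [Category C] {F : C ⥤ C} {b : Endofunctor.Coalgebra F}
  {T : Endofunctor.Algebra F} {in' : b.V ⟶ T.a}
  {unfold : T ⟶ T} (hunfold : in' ≫ unfold.f = b.str ≫ F.map in' ≫ T.str)

include hunfold in
theorem in_comp_unfold_comp_f {a : Endofunctor.Algebra F} (g : T ⟶ a) :
    in' ≫ (unfold ≫ g).f = b.str ≫ F.map (in' ≫ g.f) ≫ a.str := by
  rw [Endofunctor.Algebra.comp_f, ← Category.assoc, hunfold, F.map_comp]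
  simp only [Category.assoc, g.h]

variable (free : ∀ (a : Endofunctor.Algebra F) (j : b.V ⟶ a.a), ∃! g : T ⟶ a, in' ≫ g.f = j)
include free

theorem hom_ext_of_free {a : Endofunctor.Algebra F} {g g' : T ⟶ a}
    (h : in' ≫ g.f = in' ≫ g'.f) : g = g' :=
  (free a _).unique h rfl

theorem comp_eq_iff_of_free {M a : Endofunctor.Algebra F} (q : T ⟶ M) (g : T ⟶ a)
    (h : M ⟶ a) : q ≫ h = g ↔ (in' ≫ q.f) ≫ h.f = in' ≫ g.f :=
  ⟨fun e => by rw [← e, Endofunctor.Algebra.comp_f, Category.assoc],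
    fun e => hom_ext_of_free free (by rwa [Endofunctor.Algebra.comp_f, ← Category.assoc])⟩

include hunfold

theorem id_comp_eq_unfold_comp_iff {a : Endofunctor.Algebra F} (g : T ⟶ a) :
    𝟙 T ≫ g = unfold ≫ g ↔ in' ≫ g.f = b.str ≫ F.map (in' ≫ g.f) ≫ a.str := by
  rw [Category.id_comp, ← in_comp_unfold_comp_f hunfold]
  exact ⟨fun e => e ▸ rfl, fun e => hom_ext_of_free free e⟩

theorem relativelyInitial_of_isColimit {M : Endofunctor.Algebra F} {q : T ⟶ M}
    {hq : 𝟙 T ≫ q = unfold ≫ q} (hc : IsColimit (Cofork.ofπ q hq)) :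
    RelativelyInitial b M (in' ≫ q.f) := by
  refine ⟨(id_comp_eq_unfold_comp_iff hunfold free q).1 hq, fun a j hj => ?_⟩
  obtain ⟨g, rfl, -⟩ := free a j
  exact (existsUnique_congr fun h => comp_eq_iff_of_free free q g h).1
    (Cofork.IsColimit.existsUnique hc g ((id_comp_eq_unfold_comp_iff hunfold free g).2 hj))

noncomputable def isColimitOfRelativelyInitial {M : Endofunctor.Algebra F} {q : T ⟶ M}
    (hq : 𝟙 T ≫ q = unfold ≫ q) (hη : RelativelyInitial b M (in' ≫ q.f)) :
    IsColimit (Cofork.ofπ q hq) :=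
  Cofork.IsColimit.ofExistsUnique fun s =>
    (existsUnique_congr fun h => comp_eq_iff_of_free free q s.π h).2
      (hη.2 s.pt _ ((id_comp_eq_unfold_comp_iff hunfold free s.π).1 s.condition))

end FreeAlgebra

/-- A coequalizer of `(id, unfold)` in the category of `F`-algebras exists iff
`b` has a relatively initial algebra; a coequalizer `q : T ⟶ M` makes
`(M, q.f ∘ in')` relatively initial for `b`, and conversely every relatively
initial algebra arises as such a coequalizer. -/
theorem coequalizer_iff_relatively_initial
    {C : Type*} [Category C] (F : C ⥤ C)
    (b : Endofunctor.Coalgebra F) (T : Endofunctor.Algebra F)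
    (in' : b.V ⟶ T.a)
    (free : ∀ (a : Endofunctor.Algebra F) (j : b.V ⟶ a.a),
      ∃! g : T ⟶ a, in' ≫ g.f = j)
    (unfold : T ⟶ T)
    (hunfold : in' ≫ unfold.f = b.str ≫ F.map in' ≫ T.str) :
    ((∃ (M : Endofunctor.Algebra F) (q : T ⟶ M)
        (hq : 𝟙 T ≫ q = unfold ≫ q), Nonempty (IsColimit (Cofork.ofπ q hq))) ↔
      (∃ (M : Endofunctor.Algebra F) (η : b.V ⟶ M.a), RelativelyInitial b M η))
    ∧ (∀ (M : Endofunctor.Algebra F) (q : T ⟶ M) (hq : 𝟙 T ≫ q = unfold ≫ q),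
        Nonempty (IsColimit (Cofork.ofπ q hq)) →
          RelativelyInitial b M (in' ≫ q.f))
    ∧ (∀ (M : Endofunctor.Algebra F) (η : b.V ⟶ M.a),
        RelativelyInitial b M η →
          ∃ (q : T ⟶ M) (hq : 𝟙 T ≫ q = unfold ≫ q),
            Nonempty (IsColimit (Cofork.ofπ q hq)) ∧ in' ≫ q.f = η) := by
  have coeq_to_init : ∀ (M : Endofunctor.Algebra F) (q : T ⟶ M) (hq : 𝟙 T ≫ q = unfold ≫ q),
      Nonempty (IsColimit (Cofork.ofπ q hq)) → RelativelyInitial b M (in' ≫ q.f) :=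
    fun _ _ _ ⟨hc⟩ => relativelyInitial_of_isColimit hunfold free hc
  have init_to_coeq : ∀ (M : Endofunctor.Algebra F) (η : b.V ⟶ M.a),
      RelativelyInitial b M η → ∃ (q : T ⟶ M) (hq : 𝟙 T ≫ q = unfold ≫ q),
        Nonempty (IsColimit (Cofork.ofπ q hq)) ∧ in' ≫ q.f = η := by
    intro M η hη
    obtain ⟨q, rfl, -⟩ := free M η
    have hq := (id_comp_eq_unfold_comp_iff hunfold free q).2 hη.1
    exact ⟨q, hq, ⟨isColimitOfRelativelyInitial hunfold free hq hη⟩, rfl⟩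
  refine ⟨⟨?_, ?_⟩, coeq_to_init, init_to_coeq⟩
  · rintro ⟨M, q, hq, hc⟩
    exact ⟨M, _, coeq_to_init M q hq hc⟩
  · rintro ⟨M, η, hη⟩
    obtain ⟨q, hq, hc, -⟩ := init_to_coeq M η hη
    exact ⟨M, q, hq, hc⟩
end

section
/- Let F : D → D be the functor F X = {×, ✓} × X on Set, and let a : F({0,1}) → {0,1} be the algebra defined by a(✓, s) = 1 − s and a(×, s) = s. The relatively terminal coalgebra ν(a) has carrier the set of streams (u₁,s₁)(u₂,s₂)… ∈ ({×,✓} × {0,1})^ω such that for all i: uᵢ = × implies sᵢ = sᵢ₊₁, and uᵢ = ✓ implies sᵢ = 1 − sᵢ₊₁; equivalently, this set, with coalgebra structure given by head-tail and the projection to the first pair's symbol, is terminal relative to a. -/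
/-!
A coalgebra morphism `g` into streams is determined by `f = (· 0).2 ∘ g`: `g x` must be
the trace of the orbit `x, (c x).2, (c (c x).2).2, …` with entries `((c y).1, f y)`.
The ca-morphism equation `f = a ∘ (id × f) ∘ c`, read along the orbit, is exactly the
condition that this trace follows `a`.
-/

/-- The symbol `✓` is encoded as `true` and `×` as `false`. The algebra
`a : {×,✓} × {0,1} → {0,1}` with `a(✓, s) = 1 - s` and `a(×, s) = s`, with
`{0,1}` encoded as `Bool`. -/
def aAlg : Bool × Bool → Bool :=
  fun p => if p.1 then !p.2 else p.2

/-- The carrier of `ν(a)`: streams over `{×,✓} × {0,1}` that follow the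
action of `a` when read from right to left. -/
def NuCarrier : Type :=
  {σ : ℕ → Bool × Bool // ∀ i, (σ i).2 = aAlg ((σ i).1, (σ (i + 1)).2)}

namespace RelativelyTerminal

variable {A S B : Type*}

def Follows (a : A × S → S) (σ : ℕ → A × S) : Prop :=
  ∀ i, (σ i).2 = a ((σ i).1, (σ (i + 1)).2)

/-- Coalgebra morphisms from `c` to the stream coalgebra `σ ↦ ((σ 0).1, tail σ)`. -/
def IsStreamHom (c : B → A × B) (g : B → ℕ → A × S) : Prop :=
  ∀ x, (g x 0).1 = (c x).1 ∧ ∀ i, g x (i + 1) = g (c x).2 i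

def IsCAMorphism (c : B → A × B) (a : A × S → S) (f : B → S) : Prop :=
  ∀ x, f x = a ((c x).1, f (c x).2)

def trace (c : B → A × B) (f : B → S) (x : B) (i : ℕ) : A × S :=
  ((c ((Prod.snd ∘ c)^[i] x)).1, f ((Prod.snd ∘ c)^[i] x))

variable {c : B → A × B} {a : A × S → S}

theorem IsStreamHom.isCAMorphism_head {g : B → ℕ → A × S} (hg : IsStreamHom c g)
    (hfollows : ∀ x, Follows a (g x)) : IsCAMorphism c a fun x => (g x 0).2 := by
  intro x
  dsimp only
  rw [hfollows x 0, (hg x).1, (hg x).2 0]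

theorem isStreamHom_trace (f : B → S) : IsStreamHom c (trace c f) :=
  fun _ => ⟨rfl, fun _ => rfl⟩

theorem follows_trace {f : B → S} (hf : IsCAMorphism c a f) (x : B) :
    Follows a (trace c f x) := by
  intro i
  simp only [trace, Function.iterate_succ_apply']
  exact hf _

theorem IsStreamHom.eq_trace {g : B → ℕ → A × S} {f : B → S} (hg : IsStreamHom c g)
    (hhead : ∀ x, (g x 0).2 = f x) : g = trace c f := by
  funext x i
  induction i generalizing x with
  | zero => exact Prod.ext (hg x).1 (hhead x)
  | succ i ih => rw [(hg x).2 i, ih]; rfl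

end RelativelyTerminal

open RelativelyTerminal in
/-- The set of streams following the algebra `aAlg`, with coalgebra structure
`σ ↦ (u₁, tail σ)` and universal ca-morphism `σ ↦ s₁`, is terminal relative
to `aAlg`: for any coalgebra `c : B → {×,✓} × B`, (i) composing a coalgebra
morphism into `NuCarrier` with the universal map `σ ↦ s₁` yields a
ca-morphism to `aAlg`, and (ii) every ca-morphism to `aAlg` arises this way
from a unique coalgebra morphism. -/
theorem nu_of_flip_algebra_is_relatively_terminal :
    ∀ (B : Type) (c : B → Bool × B),
      (∀ g : B → NuCarrier,
        (∀ x, ((g x).1 0).1 = (c x).1 ∧ ∀ i, (g x).1 (i + 1) = (g (c x).2).1 i) →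
          ∀ x, ((g x).1 0).2 = aAlg ((c x).1, ((g (c x).2).1 0).2)) ∧
      (∀ f : B → Bool, (∀ x, f x = aAlg ((c x).1, f (c x).2)) →
        ∃! g : B → NuCarrier,
          (∀ x, ((g x).1 0).1 = (c x).1 ∧ ∀ i, (g x).1 (i + 1) = (g (c x).2).1 i)
            ∧ ∀ x, ((g x).1 0).2 = f x) := by
  intro B c
  refine ⟨fun g hg => IsStreamHom.isCAMorphism_head (g := fun x => (g x).1) hg
    fun x => (g x).2, fun f hf => ?_⟩
  refine ⟨fun x => ⟨trace c f x, follows_trace hf x⟩, ⟨isStreamHom_trace f, fun _ => rfl⟩, ?_⟩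
  rintro g ⟨hg, hhead⟩
  funext x
  exact Subtype.ext (congrFun (IsStreamHom.eq_trace (g := fun x => (g x).1) hg hhead) x)
end

section
/- Let L ⊣ R be an adjunction between categories C and D, F : C → C and G : D → D endofunctors, and θ : L F ⇒ G L a natural transformation with mate θ♭ : F R ⇒ R G given by θ♭ = Rε_G ∘ Rθ_R ∘ η_{FR} (using unit η and counit ε). Then for every F-coalgebra b : B → F B and G-algebra a : G A → A, the adjunction bijection Hom_D(L B, A) ≅ Hom_C(B, R A) restricts to a bijection between coalgebra-to-algebra morphisms from the G-coalgebra θ_B ∘ L b : L B → G L B to a, and coalgebra-to-algebra morphisms from b to the F-algebra R a ∘ θ♭_A : F R A → R A. -/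
open CategoryTheory

/-- Given a step `θ : LF ⇒ GL` over an adjunction `L ⊣ R`, with mate
`θ♭ : FR ⇒ RG`, the adjunction bijection restricts to a bijection between
ca-morphisms from the lifted coalgebra `L̄ b = θ_B ∘ L b` to a `G`-algebra
`a`, and ca-morphisms from `b` to the lifted algebra `R̄ a = R a ∘ θ♭_A`. -/
theorem step_hylo_bijection
    {C D : Type*} [Category C] [Category D]
    (L : C ⥤ D) (R : D ⥤ C) (adj : L ⊣ R)
    (F : C ⥤ C) (G : D ⥤ D)
    (θ : F ⋙ L ⟶ L ⋙ G) (θb : R ⋙ F ⟶ G ⋙ R)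
    (hθb : ∀ A : D, θb.app A =
      adj.unit.app (F.obj (R.obj A)) ≫ R.map (θ.app (R.obj A)) ≫
        R.map (G.map (adj.counit.app A))) :
    ∀ {B : C} {A : D} (b : B ⟶ F.obj B) (a : G.obj A ⟶ A) (f : L.obj B ⟶ A),
      (f = (L.map b ≫ θ.app B) ≫ G.map f ≫ a) ↔
        (adj.homEquiv B A f =
          b ≫ F.map (adj.homEquiv B A f) ≫ (θb.app A ≫ R.map a)) := by
  intro B A b a f
  rw [show (b ≫ F.map (adj.homEquiv B A f) ≫ (θb.app A ≫ R.map a)) =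
      adj.homEquiv B A ((L.map b ≫ θ.app B) ≫ G.map f ≫ a) from ?_,
    Equiv.apply_eq_iff_eq]
  have hθ := congrArg R.map (θ.naturality (adj.homEquiv B A f))
  simp only [Functor.comp_map, Functor.map_comp, Adjunction.homEquiv_unit] at hθ
  simp only [Adjunction.homEquiv_unit, hθb, Functor.map_comp, Category.assoc]
  rw [← F.map_comp_assoc, ← adj.unit_naturality_assoc]
  simp only [Functor.map_comp, Category.assoc]
  rw [reassoc_of% hθ]
  rw [← adj.unit_naturality_assoc]
  have h0 : L.map (adj.unit.app B) ≫ L.map (R.map f) ≫ adj.counit.app A = f := by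
    simp
  have hf := congrArg (fun g => R.map (G.map g)) h0
  simp only [Functor.map_comp, Category.assoc] at hf
  rw [reassoc_of% hf]
end

section
/- In the setting of a step θ : L F ⇒ G L over an adjunction L ⊣ R: if b : B → F B is a recursive F-coalgebra, then L̄(b) := θ_B ∘ L b : L B → G L B is a recursive G-coalgebra; dually, if a : G A → A is a corecursive G-algebra, then R̄(a) := R a ∘ θ♭_A : F R A → R A is a corecursive F-algebra. -/
/-!
Transposition along `L ⊣ R` is a bijection `(L B ⟶ A) ≃ (B ⟶ R A)`, and since `θ♭` is the mate
of `θ` it carries the coalgebra-to-algebra morphisms `L̄ b → a` exactly onto the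
coalgebra-to-algebra morphisms `b → R̄ a`. Unique existence on either side is therefore
equivalent, which gives both halves at once.
-/

open CategoryTheory

namespace CategoryTheory

variable {C D : Type*} [Category C] [Category D]

def IsCoalgebraToAlgebraHom (F : C ⥤ C) {B A : C} (b : B ⟶ F.obj B) (a : F.obj A ⟶ A)
    (f : B ⟶ A) : Prop :=
  f = b ≫ F.map f ≫ a

def IsRecursiveCoalgebra (F : C ⥤ C) {B : C} (b : B ⟶ F.obj B) : Prop :=
  ∀ (A : C) (a : F.obj A ⟶ A), ∃! f : B ⟶ A, IsCoalgebraToAlgebraHom F b a f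

def IsCorecursiveAlgebra (F : C ⥤ C) {A : C} (a : F.obj A ⟶ A) : Prop :=
  ∀ (B : C) (b : B ⟶ F.obj B), ∃! f : B ⟶ A, IsCoalgebraToAlgebraHom F b a f

namespace Adjunction

variable {L : C ⥤ D} {R : D ⥤ C} (adj : L ⊣ R) {F : C ⥤ C} {G : D ⥤ D}
  (θ : F ⋙ L ⟶ L ⋙ G) (θb : R ⋙ F ⟶ G ⋙ R)
  (hθb : ∀ A : D, θb.app A =
    adj.unit.app (F.obj (R.obj A)) ≫ R.map (θ.app (R.obj A)) ≫
      R.map (G.map (adj.counit.app A)))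
include hθb

theorem homEquiv_step_comp {B : C} {A : D} (f : L.obj B ⟶ A) :
    adj.homEquiv _ _ (θ.app B ≫ G.map f) = F.map (adj.homEquiv B A f) ≫ θb.app A := by
  have hf : L.map (adj.homEquiv B A f) ≫ adj.counit.app A = f := by
    simpa [adj.homEquiv_counit] using (adj.homEquiv B A).symm_apply_apply f
  have hθ := θ.naturality (adj.homEquiv B A f)
  simp only [Functor.comp_obj, Functor.comp_map] at hθ
  rw [hθb, ← adj.unit_naturality_assoc, ← R.map_comp_assoc, hθ, ← R.map_comp, Category.assoc,
    ← G.map_comp, hf, adj.homEquiv_unit]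

theorem isCoalgebraToAlgebraHom_homEquiv_iff {B : C} {A : D} (b : B ⟶ F.obj B)
    (a : G.obj A ⟶ A) (f : L.obj B ⟶ A) :
    IsCoalgebraToAlgebraHom G (L.map b ≫ θ.app B) a f ↔
      IsCoalgebraToAlgebraHom F b (θb.app A ≫ R.map a) (adj.homEquiv B A f) := by
  have htranspose : adj.homEquiv B A ((L.map b ≫ θ.app B) ≫ G.map f ≫ a) =
      b ≫ F.map (adj.homEquiv B A f) ≫ θb.app A ≫ R.map a := by
    rw [← Category.assoc, adj.homEquiv_naturality_right, Category.assoc,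
      adj.homEquiv_naturality_left, homEquiv_step_comp adj θ θb hθb]
    simp only [Category.assoc]
  unfold IsCoalgebraToAlgebraHom
  rw [← htranspose, (adj.homEquiv B A).apply_eq_iff_eq]

theorem isRecursiveCoalgebra_lift {B : C} {b : B ⟶ F.obj B}
    (hb : IsRecursiveCoalgebra F b) : IsRecursiveCoalgebra G (L.map b ≫ θ.app B) := fun A a =>
  ((adj.homEquiv B A).existsUnique_congr
    (isCoalgebraToAlgebraHom_homEquiv_iff adj θ θb hθb b a)).mpr
    (hb (R.obj A) (θb.app A ≫ R.map a))

theorem isCorecursiveAlgebra_lift {A : D} {a : G.obj A ⟶ A}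
    (ha : IsCorecursiveAlgebra G a) : IsCorecursiveAlgebra F (θb.app A ≫ R.map a) := fun B b =>
  ((adj.homEquiv B A).existsUnique_congr
    (isCoalgebraToAlgebraHom_homEquiv_iff adj θ θb hθb b a)).mp
    (ha (L.obj B) (L.map b ≫ θ.app B))

end Adjunction

end CategoryTheory

/-- Given a step `θ : LF ⇒ GL` over an adjunction `L ⊣ R`, with mate `θ♭`:
the lift `L̄` preserves recursive coalgebras and the lift `R̄` preserves
corecursive algebras. -/
theorem step_preserves_recursive_and_corecursive
    {C D : Type*} [Category C] [Category D]
    (L : C ⥤ D) (R : D ⥤ C) (adj : L ⊣ R)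
    (F : C ⥤ C) (G : D ⥤ D)
    (θ : F ⋙ L ⟶ L ⋙ G) (θb : R ⋙ F ⟶ G ⋙ R)
    (hθb : ∀ A : D, θb.app A =
      adj.unit.app (F.obj (R.obj A)) ≫ R.map (θ.app (R.obj A)) ≫
        R.map (G.map (adj.counit.app A))) :
    (∀ (B : C) (b : B ⟶ F.obj B),
      (∀ (A : C) (a : F.obj A ⟶ A), ∃! f : B ⟶ A, f = b ≫ F.map f ≫ a) →
      (∀ (A' : D) (a' : G.obj A' ⟶ A'),
        ∃! f : L.obj B ⟶ A', f = (L.map b ≫ θ.app B) ≫ G.map f ≫ a')) ∧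
    (∀ (A : D) (a : G.obj A ⟶ A),
      (∀ (B' : D) (b' : B' ⟶ G.obj B'), ∃! f : B' ⟶ A, f = b' ≫ G.map f ≫ a) →
      (∀ (B : C) (b : B ⟶ F.obj B),
        ∃! f : B ⟶ R.obj A, f = b ≫ F.map f ≫ (θb.app A ≫ R.map a))) :=
  ⟨fun _ _ hb => adj.isRecursiveCoalgebra_lift θ θb hθb hb,
    fun _ _ ha => adj.isCorecursiveAlgebra_lift θ θb hθb ha⟩
end

section
/- Let (C, †) be a dagger category († : C → Cᵒᵖ an identity-on-objects functor with †² = id) with limits and colimits of countable chains, and F : C → C a dagger functor preserving them. For an F-coalgebra c : X → F X, the relatively initial algebra μ(c), constructed as the colimit of the chain X → F X → F² X → …, and the relatively terminal coalgebra ν(c†) of the algebra c† : F X → X, constructed as the limit of the chain X ← F X ← F² X ← …, satisfy μ(c)† ≅ ν(c†) as coalgebras. -/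
open CategoryTheory

/-- The `n`-th power of an endofunctor applied to an object. -/
def pow {C : Type*} [Category C] (F : C ⥤ C) : ℕ → C → C
  | 0, X => X
  | n + 1, X => F.obj (pow F n X)

/-- The chain `X ⟶ F X ⟶ F² X ⟶ ⋯` generated by a coalgebra `c : X ⟶ F X`. -/
def chainMap {C : Type*} [Category C] (F : C ⥤ C) {X : C} (c : X ⟶ F.obj X) :
    ∀ n : ℕ, pow F n X ⟶ pow F (n + 1) X
  | 0 => c
  | n + 1 => F.map (chainMap F c n)

/-- In a dagger category with (co)limits of countable chains preserved by the
dagger functor `F`, the dagger of the relatively initial algebra `μ(c)`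
(the colimit of `X ⟶ F X ⟶ ⋯`) is isomorphic, as a coalgebra, to the
relatively terminal coalgebra `ν(c†)` (the limit of `X ⟵ F X ⟵ ⋯`). -/
theorem dagger_mu_iso_nu
    {C : Type*} [Category C]
    (dag : ∀ {X Y : C}, (X ⟶ Y) → (Y ⟶ X))
    (dag_id : ∀ X : C, dag (𝟙 X) = 𝟙 X)
    (dag_comp : ∀ {X Y Z : C} (f : X ⟶ Y) (g : Y ⟶ Z),
      dag (f ≫ g) = dag g ≫ dag f)
    (dag_dag : ∀ {X Y : C} (f : X ⟶ Y), dag (dag f) = f)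
    (F : C ⥤ C)
    (Fdag : ∀ {X Y : C} (f : X ⟶ Y), F.map (dag f) = dag (F.map f))
    {X : C} (c : X ⟶ F.obj X)
    -- μ(c): the colimit of the chain `X ⟶ F X ⟶ F² X ⟶ ⋯`
    (M : C) (ι : ∀ n : ℕ, pow F n X ⟶ M)
    (hι : ∀ n, ι n = chainMap F c n ≫ ι (n + 1))
    (Mcolim : ∀ (Y : C) (κ : ∀ n : ℕ, pow F n X ⟶ Y),
      (∀ n, κ n = chainMap F c n ≫ κ (n + 1)) →
        ∃! g : M ⟶ Y, ∀ n, ι n ≫ g = κ n)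
    -- F preserves this colimit
    (Fcolim : ∀ (Y : C) (κ : ∀ n : ℕ, F.obj (pow F n X) ⟶ Y),
      (∀ n, κ n = F.map (chainMap F c n) ≫ κ (n + 1)) →
        ∃! g : F.obj M ⟶ Y, ∀ n, F.map (ι n) ≫ g = κ n)
    -- the induced algebra structure on `M`
    (m : F.obj M ⟶ M) (hm : ∀ n, F.map (ι n) ≫ m = ι (n + 1))
    -- ν(c†): the limit of the chain `X ⟵ F X ⟵ F² X ⟵ ⋯` of daggered maps
    (N : C) (π : ∀ n : ℕ, N ⟶ pow F n X)
    (hπ : ∀ n, π n = π (n + 1) ≫ dag (chainMap F c n))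
    (Nlim : ∀ (Y : C) (κ : ∀ n : ℕ, Y ⟶ pow F n X),
      (∀ n, κ n = κ (n + 1) ≫ dag (chainMap F c n)) →
        ∃! g : Y ⟶ N, ∀ n, g ≫ π n = κ n)
    -- F preserves this limit
    (Flim : ∀ (Y : C) (κ : ∀ n : ℕ, Y ⟶ F.obj (pow F n X)),
      (∀ n, κ n = κ (n + 1) ≫ dag (F.map (chainMap F c n))) →
        ∃! g : Y ⟶ F.obj N, ∀ n, g ≫ F.map (π n) = κ n)
    -- the induced coalgebra structure on `N`
    (nstr : N ⟶ F.obj N) (hnstr : ∀ n, nstr ≫ F.map (π n) = π (n + 1)) :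
    -- `μ(c)† ≅ ν(c†)` as coalgebras
    ∃ φ : M ≅ N, dag m ≫ F.map φ.hom = φ.hom ≫ nstr := by
  obtain ⟨f, hf, -⟩ := Nlim M (fun n => dag (ι n)) (fun n => by
    show dag (ι n) = dag (ι (n + 1)) ≫ dag (chainMap F c n)
    rw [hι n, dag_comp])
  obtain ⟨g, hg, -⟩ := Mcolim N (fun n => dag (π n)) (fun n => by
    show dag (π n) = chainMap F c n ≫ dag (π (n + 1))
    rw [hπ n, dag_comp, dag_dag])
  obtain ⟨idN, -, hNuniq⟩ := Nlim N π hπ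
  have hgf : dag g ≫ f = 𝟙 N := by
    have h1 : ∀ n, (dag g ≫ f) ≫ π n = π n := fun n => by
      rw [Category.assoc, hf n, ← dag_comp, hg n, dag_dag]
    have h2 : ∀ n, (𝟙 N) ≫ π n = π n := fun n => Category.id_comp _
    exact (hNuniq _ h1).trans (hNuniq _ h2).symm
  obtain ⟨idM, -, hMuniq⟩ := Mcolim M ι hι
  have h1 : g ≫ dag f = 𝟙 M := by
    have ha : ∀ n, ι n ≫ g ≫ dag f = ι n := fun n => by
      rw [← Category.assoc, hg n, ← dag_comp, hf n, dag_dag]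
    have hb : ∀ n, ι n ≫ 𝟙 M = ι n := fun n => Category.comp_id _
    exact (hMuniq _ ha).trans (hMuniq _ hb).symm
  have hfg : f ≫ dag g = 𝟙 M := by
    have h2 : dag (f ≫ dag g) = dag (𝟙 M) := by
      rw [dag_comp, dag_dag, h1, dag_id]
    calc f ≫ dag g = dag (dag (f ≫ dag g)) := (dag_dag _).symm
      _ = dag (dag (𝟙 M)) := by rw [h2]
      _ = 𝟙 M := dag_dag _
  refine ⟨⟨f, dag g, hfg, hgf⟩, ?_⟩
  obtain ⟨w, -, hFuniq⟩ := Flim M (fun n => dag (ι (n + 1))) (fun n => by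
    show dag (ι (n + 1)) = dag (ι (n + 2)) ≫ dag (F.map (chainMap F c n))
    have hc : chainMap F c (n + 1) = F.map (chainMap F c n) := rfl
    rw [hι (n + 1), dag_comp, hc]; rfl)
  show dag m ≫ F.map f = f ≫ nstr
  have ha : ∀ n, (dag m ≫ F.map f) ≫ F.map (π n) = dag (ι (n + 1)) := fun n => by
    rw [Category.assoc, ← F.map_comp, hf n, Fdag, ← dag_comp, hm n]; rfl
  have hb : ∀ n, (f ≫ nstr) ≫ F.map (π n) = dag (ι (n + 1)) := fun n => by
    rw [Category.assoc, hnstr n]; exact hf (n + 1)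
  exact (hFuniq _ ha).trans (hFuniq _ hb).symm
end

section
/- Let F : C → C be an endofunctor, b : B → F B a coalgebra, and form the coslice category B\C. Define F_b : B\C → B\C by sending (x : B → X) to (F x ∘ b : B → F X). Then an initial algebra for F_b is the same data as a relatively initial F-algebra for b: an F_b-algebra structure on (j : B → A) corresponds to an F-algebra a : F A → A for which j is a coalgebra-to-algebra morphism from b to a, and initiality corresponds to the natural isomorphism Alg(F)(μ(b), −) ≅ Hylo(b, −). -/
open CategoryTheory CategoryTheory.Limits

/-- The endofunctor `F_b` on the coslice category `B\C` induced by a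
coalgebra `b : B ⟶ F B`, sending `(x : B ⟶ X)` to `(F x ∘ b : B ⟶ F X)`. -/
def cosliceLift {C : Type*} [Category C] (F : C ⥤ C) {B : C}
    (b : B ⟶ F.obj B) : Under B ⥤ Under B where
  obj x := Under.mk (b ≫ F.map x.hom)
  map {x y} f := Under.homMk (F.map f.right)
    (by simp only [Under.mk_hom, Category.assoc, ← Functor.map_comp, Under.w f])

/-- An initial algebra for `F_b : B\C ⥤ B\C` is the same data as a relatively
initial `F`-algebra for `b`: (i) `F_b`-algebra structures on `(j : B ⟶ A)`
correspond to `F`-algebras `a : F A ⟶ A` for which `j` is a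
coalgebra-to-algebra morphism from `b` to `a`; (ii) an `F_b`-algebra is
initial iff the corresponding `F`-algebra, with the ca-morphism given by its
point, satisfies the universal property of the relatively initial algebra. -/
theorem coslice_initial_algebra_is_relatively_initial
    {C : Type*} [Category C] (F : C ⥤ C) {B : C} (b : B ⟶ F.obj B) :
    (∀ (A : C) (j : B ⟶ A) (a : F.obj A ⟶ A),
      (∃ s : (cosliceLift F b).obj (Under.mk j) ⟶ Under.mk j, s.right = a) ↔
        j = b ≫ F.map j ≫ a) ∧
    (∀ X : Endofunctor.Algebra (cosliceLift F b),
      Nonempty (IsInitial X) ↔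
        (X.a.hom = b ≫ F.map X.a.hom ≫ X.str.right ∧
          ∀ (A : C) (a : F.obj A ⟶ A) (j : B ⟶ A),
            j = b ≫ F.map j ≫ a →
              ∃! g : X.a.right ⟶ A,
                (F.map g ≫ a = X.str.right ≫ g) ∧ X.a.hom ≫ g = j)) := by
  constructor
  · intro A j a
    constructor
    · rintro ⟨s, rfl⟩
      have := Under.w s
      simp only [cosliceLift, Under.mk_hom, Category.assoc] at this
      exact this.symm
    · intro h
      exact ⟨Under.homMk a (by simpa [cosliceLift] using h.symm), rfl⟩
  · intro X
    have hX : X.a.hom = b ≫ F.map X.a.hom ≫ X.str.right := by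
      have := Under.w X.str
      simp only [cosliceLift, Under.mk_hom, Category.assoc] at this
      exact this.symm
    constructor
    · rintro ⟨hI⟩
      refine ⟨hX, fun A a j hj => ?_⟩
      -- build the corresponding algebra
      let Y : Endofunctor.Algebra (cosliceLift F b) :=
        { a := Under.mk j
          str := Under.homMk a (by simpa [cosliceLift] using hj.symm) }
      refine ⟨(hI.to Y).f.right, ⟨?_, ?_⟩, ?_⟩
      · have := (hI.to Y).h
        have h2 := congrArg CommaMorphism.right this
        exact h2
      · simpa [Y] using Under.w (hI.to Y).f
      · intro g ⟨hg1, hg2⟩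
        let m : X ⟶ Y :=
          { f := Under.homMk g hg2
            h := by
              ext
              exact hg1 }
        have : m = hI.to Y := hI.hom_ext _ _
        exact congrArg (fun n => n.f.right) this
    · rintro ⟨-, h⟩
      have key : ∀ Y : Endofunctor.Algebra (cosliceLift F b),
          ∃! g : X.a.right ⟶ Y.a.right,
            (F.map g ≫ Y.str.right = X.str.right ≫ g) ∧ X.a.hom ≫ g = Y.a.hom := by
        intro Y
        refine h _ _ _ ?_
        have := Under.w Y.str
        simp only [cosliceLift, Under.mk_hom, Category.assoc] at this
        exact this.symm
      refine ⟨IsInitial.ofUniqueHom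
        (fun Y =>
          { f := Under.homMk (key Y).choose (key Y).choose_spec.1.2
            h := by
              ext
              simpa [cosliceLift] using (key Y).choose_spec.1.1 })
        (fun Y m => ?_)⟩
      apply Endofunctor.Algebra.Hom.ext
      ext
      refine (key Y).choose_spec.2 m.f.right ⟨?_, ?_⟩
      · have := congrArg CommaMorphism.right m.h
        simpa [cosliceLift] using this
      · simpa using Under.w m.f
end
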